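/- If H is an r-uniform hypergraph on n vertices whose minimum positive co-degree exceeds n/r, then H contains an r-triangle T^r, i.e., there exist r+1 vertices v_1,...,v_{r+1} such that v_1...v_r, v_1...v_{r-1}v_{r+1}, and v_1...v_{r-2}v_r v_{r+1} are all edges of H. -/

import Mathlib

/-!
Fix an edge `e`. For each `a ∈ e` the `(r-1)`-set `e \ {a}` lies in an edge, so more than `n / r`
vertices `u` extend it to an edge. Summing over the `r` vertices of `e` gives more than `n`
incidences, so some `u` extends both `e \ {a}` and `e \ {b}` for distinct `a, b ∈ e`; such a `u`
lies outside `e`, and `e`, `e \ {a} ∪ {u}`, `e \ {b} ∪ {u}` form an `r`-triangle.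
-/

open Finset

theorem Finset.exists_ne_mem_inter_of_card_lt_sum {ι α : Type*} [Fintype α] [DecidableEq α]
    {s : Finset ι} {t : ι → Finset α} (h : Fintype.card α < ∑ i ∈ s, #(t i)) :
    ∃ i ∈ s, ∃ j ∈ s, i ≠ j ∧ ∃ x, x ∈ t i ∧ x ∈ t j := by
  by_contra! hdisj
  refine (card_le_univ (s.biUnion t)).not_gt ?_
  rwa [card_biUnion fun i hi j hj hij =>
    disjoint_left.mpr fun x hxi hxj => hdisj i hi j hj hij x hxi hxj]

theorem Finset.lt_sum_of_forall_div_card_lt {ι : Type*} {s : Finset ι} (hs : s.Nonempty)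
    {c : ι → ℕ} {x : ℝ} (h : ∀ i ∈ s, x / #s < c i) : x < ∑ i ∈ s, (c i : ℝ) := by
  calc x = ∑ _i ∈ s, x / #s := by
        rw [sum_const, nsmul_eq_mul]; field_simp [hs.card_pos.ne']
    _ < ∑ i ∈ s, (c i : ℝ) := sum_lt_sum_of_nonempty hs h

theorem Finset.exists_injective_extend_of_card_eq {ι α : Type*} [Fintype ι] [DecidableEq α]
    {t : Finset α} (ht : Fintype.card ι = #t) {s : Finset ι} {f : ι → α} (hfs : s.image f ⊆ t)
    (hf : Set.InjOn f s) :
    ∃ v : ι → α, Function.Injective v ∧ univ.image v = t ∧ ∀ i ∈ s, v i = f i := by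
  obtain ⟨g, hg⟩ := exists_equiv_extend_of_card_eq ht hfs hf
  refine ⟨fun i => g i, Subtype.val_injective.comp g.injective, ?_, hg⟩
  ext x
  simpa using ⟨fun ⟨i, hi⟩ => hi ▸ (g i).2, fun hx => ⟨g.symm ⟨x, hx⟩, by simp⟩⟩

namespace Hypergraph

variable {α : Type*} [DecidableEq α]

def neighborFinset [Fintype α] (H : Finset (Finset α)) (S : Finset α) : Finset α :=
  {u | u ∉ S ∧ insert u S ∈ H}

@[simp]
theorem mem_neighborFinset [Fintype α] {H : Finset (Finset α)} {S : Finset α} {u : α} :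
    u ∈ neighborFinset H S ↔ u ∉ S ∧ insert u S ∈ H := by
  simp [neighborFinset]

theorem card_filter_superset_le_card_neighborFinset [Fintype α] {H : Finset (Finset α)}
    {S : Finset α} {r : ℕ} (huniform : ∀ e ∈ H, #e = r) (hS : #S + 1 = r) :
    #(H.filter (S ⊆ ·)) ≤ #(neighborFinset H S) := by
  refine (card_le_card fun f hf => ?_).trans (card_image_le (f := (insert · S)))
  obtain ⟨hfH, hSf⟩ := mem_filter.mp hf
  obtain ⟨u, huS, rfl⟩ := exists_eq_insert_iff.mpr ⟨hSf, hS.trans (huniform f hfH).symm⟩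
  exact mem_image_of_mem _ (mem_neighborFinset.mpr ⟨huS, hfH⟩)

theorem exists_triangle_of_insert_erase_mem {H : Finset (Finset α)} {e : Finset α} {r : ℕ}
    (hr : 2 ≤ r) (he : e ∈ H) (hcard : #e = r) {a b u : α} (ha : a ∈ e) (hb : b ∈ e)
    (hab : a ≠ b) (hue : u ∉ e) (hua : insert u (e.erase a) ∈ H)
    (hub : insert u (e.erase b) ∈ H) :
    ∃ v : Fin (r + 1) → α, Function.Injective v ∧
      (univ.erase (⟨r, by omega⟩ : Fin (r + 1))).image v ∈ H ∧
      (univ.erase (⟨r - 1, by omega⟩ : Fin (r + 1))).image v ∈ H ∧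
      (univ.erase (⟨r - 2, by omega⟩ : Fin (r + 1))).image v ∈ H := by
  set f : Fin (r + 1) → α := fun k => if (k : ℕ) = r then u else if (k : ℕ) = r - 1 then a else b
  set s : Finset (Fin (r + 1)) := {⟨r, by omega⟩, ⟨r - 1, by omega⟩, ⟨r - 2, by omega⟩}
  have hu : u ≠ a ∧ u ≠ b := ⟨fun h => hue (h ▸ ha), fun h => hue (h ▸ hb)⟩
  have hr1 : r - 1 ≠ r := by omega
  have hr2 : r - 2 ≠ r := by omega
  have hr21 : r - 2 ≠ r - 1 := by omega
  have hfs : s.image f ⊆ insert u e := by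
    intro x
    simp only [s, f, mem_image, mem_insert, mem_singleton]
    grind
  have hf : Set.InjOn f s := by
    intro k hk l hl hkl
    simp only [s, f, coe_insert, coe_singleton, Set.mem_insert_iff, Set.mem_singleton_iff]
      at hk hl hkl
    rcases hk with rfl | rfl | rfl <;> rcases hl with rfl | rfl | rfl <;>
      simp [hr1, hr2, hr21, hu.1, hu.2, hu.1.symm, hu.2.symm, hab, hab.symm] at hkl ⊢
  obtain ⟨v, hinj, himage, hv⟩ := exists_injective_extend_of_card_eq
    (by rw [Fintype.card_fin, card_insert_of_notMem hue, hcard]) hfs hf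
  refine ⟨v, hinj, ?_, ?_, ?_⟩ <;> rw [image_erase hinj, himage, hv _ (by simp [s])]
  · simpa [f, erase_insert hue] using he
  · simpa [f, hr1, erase_insert_of_ne hu.1] using hua
  · simpa [f, hr2, hr21, erase_insert_of_ne hu.2] using hub

end Hypergraph

open Hypergraph

theorem stmt_0 (r n : ℕ) (hr : 2 ≤ r) (H : Finset (Finset (Fin n)))
    (huniform : ∀ e ∈ H, e.card = r) (hne : H.Nonempty)
    (hcodeg : ∀ S : Finset (Fin n), S.card = r - 1 → (∃ e ∈ H, S ⊆ e) →
      (n : ℝ) / r < ((H.filter (fun e => S ⊆ e)).card : ℝ)) :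
    ∃ v : Fin (r + 1) → Fin n, Function.Injective v ∧
      (Finset.univ.erase (⟨r, by omega⟩ : Fin (r + 1))).image v ∈ H ∧
      (Finset.univ.erase (⟨r - 1, by omega⟩ : Fin (r + 1))).image v ∈ H ∧
      (Finset.univ.erase (⟨r - 2, by omega⟩ : Fin (r + 1))).image v ∈ H := by
  obtain ⟨e, he⟩ := hne
  have hcard : #e = r := huniform e he
  have hlarge : ∀ a ∈ e, (n : ℝ) / #e < #(neighborFinset H (e.erase a)) := by
    intro a ha
    have hS : #(e.erase a) = r - 1 := by rw [card_erase_of_mem ha, hcard]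
    rw [hcard]
    refine (hcodeg _ hS ⟨e, he, erase_subset a e⟩).trans_le ?_
    exact_mod_cast card_filter_superset_le_card_neighborFinset huniform (by omega)
  have hsum : Fintype.card (Fin n) < ∑ a ∈ e, #(neighborFinset H (e.erase a)) := by
    rw [Fintype.card_fin]
    exact_mod_cast lt_sum_of_forall_div_card_lt (card_pos.mp (by omega)) hlarge
  obtain ⟨a, ha, b, hb, hab, u, hua, hub⟩ := exists_ne_mem_inter_of_card_lt_sum hsum
  rw [mem_neighborFinset] at hua hub
  have hue : u ∉ e := fun hu => hab <| by grind
  exact exists_triangle_of_insert_erase_mem hr he hcard ha hb hab hue hua.2 hub.2
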